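/- Let G be a trivially perfect graph with cotree T in which every 1-labeled node has at most one non-leaf child. Let u be a node of T and X = L(u) its clade. Let 𝒞 be an optimal clustering of G and let C₁, C₂ ∈ 𝒞 be distinct parts that both intersect X. Let U be the set of strict ancestors of u in T, let A (resp. A') be the set of vertices of C₁ (resp. C₂) that are leaf children of 1-labeled nodes in U, and let B = C₁ \ (X ∪ A) and B' = C₂ \ (X ∪ A'). If |A| ≥ |B| and |A'| ≥ |B'|, then at least one of the two clusterings (𝒞 \ {C₁, C₂}) ∪ {C₁ ∪ A' ∪ B', C₂ ∩ X} and (𝒞 \ {C₁, C₂}) ∪ {C₁ ∩ X, C₂ ∪ A ∪ B} has cost at most cost_G(𝒞). -/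

import Mathlib

open Finset

universe u

namespace ClusterEditing




variable {V : Type u}

/-- Cost of a partition `P` of the finset `X` with respect to `G`: the number of
edges of `G` within `X` whose endpoints lie in different parts, plus the number of
non-adjacent pairs of distinct vertices lying in the same part. -/
noncomputable def costOn [DecidableEq V] (G : SimpleGraph V) (X : Finset V) (P : Finpartition X) : ℕ :=
  {e : Sym2 V | e ∈ G.edgeSet ∧ (∀ v ∈ e, v ∈ X) ∧ ¬ ∃ C ∈ P.parts, ∀ v ∈ e, v ∈ C}.ncard +
  {e : Sym2 V | e ∈ Gᶜ.edgeSet ∧ ∃ C ∈ P.parts, ∀ v ∈ e, v ∈ C}.ncard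

/-- Cost of a clustering (a partition of the whole vertex set). -/
noncomputable def cost [Fintype V] [DecidableEq V] (G : SimpleGraph V)
    (P : Finpartition (univ : Finset V)) : ℕ :=
  costOn G univ P

/-- An optimal clustering: one of minimum cost. -/
def IsOptimal [Fintype V] [DecidableEq V] (G : SimpleGraph V)
    (P : Finpartition (univ : Finset V)) : Prop :=
  ∀ Q : Finpartition (univ : Finset V), cost G P ≤ cost G Q

/-- Number of (ordered) adjacent pairs `(u, v)` with `u ∈ S`, `v ∈ T`. -/
noncomputable def eBetween (G : SimpleGraph V) (S T : Finset V) : ℕ :=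
  {p : V × V | p.1 ∈ S ∧ p.2 ∈ T ∧ G.Adj p.1 p.2}.ncard

/-- Number of non-adjacent pairs between `S` and `T`. -/
noncomputable def nonEBetween (G : SimpleGraph V) (S T : Finset V) : ℕ :=
  S.card * T.card - eBetween G S T





variable {V : Type u}

/-- A cotree: leaves are vertices; internal nodes carry a label (`true` = 1-node,
`false` = 0-node) and a list of children. -/
inductive Cotree (V : Type u) : Type u
  | leaf : V → Cotree V
  | node : Bool → List (Cotree V) → Cotree V

namespace Cotree

mutual
  /-- The list of leaves of a cotree. -/
  def leaves : Cotree V → List V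
    | .leaf v => [v]
    | .node _ ts => leavesAux ts
  def leavesAux : List (Cotree V) → List V
    | [] => []
    | t :: ts => leaves t ++ leavesAux ts
end

mutual
  /-- The list of all subtrees (nodes) of a cotree, including itself. -/
  def subtrees : Cotree V → List (Cotree V)
    | .leaf v => [.leaf v]
    | .node b ts => .node b ts :: subtreesAux ts
  def subtreesAux : List (Cotree V) → List (Cotree V)
    | [] => []
    | t :: ts => subtrees t ++ subtreesAux ts
end

/-- The clade (set of leaves) of a cotree node. -/
def leafSet [DecidableEq V] (t : Cotree V) : Finset V := t.leaves.toFinset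

def isLeaf : Cotree V → Bool
  | .leaf _ => true
  | .node _ _ => false

/-- `v` is a leaf child of the 1-labeled node `s`. -/
def oneLeafChild : Cotree V → V → Prop
  | .node true ts, v => Cotree.leaf v ∈ ts
  | _, _ => False

/-- The adjacency relation defined by a cotree: `u` and `v` are adjacent iff their
lowest common ancestor is a 1-node, i.e. some 1-node has `u`, `v` in two
distinct children. -/
def cAdj (T : Cotree V) (u v : V) : Prop :=
  ∃ ts : List (Cotree V), Cotree.node true ts ∈ T.subtrees ∧
    ∃ t₁ ∈ ts, ∃ t₂ ∈ ts, t₁ ≠ t₂ ∧ u ∈ t₁.leaves ∧ v ∈ t₂.leaves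

end Cotree

/-- `T` is a cotree for the graph `G`: its leaves are exactly the vertices of `G`
(each occurring once), every internal node has at least two children, and two
vertices are adjacent in `G` iff their lowest common ancestor in `T` is a 1-node. -/
structure IsCotree (T : Cotree V) (G : SimpleGraph V) : Prop where
  nodup : T.leaves.Nodup
  complete : ∀ v : V, v ∈ T.leaves
  arity : ∀ (b : Bool) (ts : List (Cotree V)), Cotree.node b ts ∈ T.subtrees → 2 ≤ ts.length
  adj : ∀ u v : V, G.Adj u v ↔ T.cAdj u v

/-- Every 1-labeled node of `T` has at most one non-leaf child. -/
def TPGCotree (T : Cotree V) : Prop :=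
  ∀ ts : List (Cotree V), Cotree.node true ts ∈ T.subtrees →
    (ts.filter fun t => !t.isLeaf).length ≤ 1

/-- A graph is trivially perfect if it admits a cotree in which every 1-labeled
node has at most one non-leaf child. -/
def IsTPG (G : SimpleGraph V) : Prop :=
  ∃ T : Cotree V, IsCotree T G ∧ TPGCotree T

/-- `X` grows in the part `C`. -/
def grows [DecidableEq V] (X C : Finset V) : Prop :=
  (C ∩ X).Nonempty ∧ (C \ X).Nonempty

/-- `X` grows in at most one part of `𝒞`. -/
def SingleGrowth [Fintype V] [DecidableEq V] (𝒞 : Finpartition (univ : Finset V))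
    (X : Finset V) : Prop :=
  ∀ C₁ ∈ 𝒞.parts, ∀ C₂ ∈ 𝒞.parts, grows X C₁ → grows X C₂ → C₁ = C₂

/-- Every clade of `T` has single-growth in `𝒞`. -/
def AllSG [Fintype V] [DecidableEq V] (T : Cotree V)
    (𝒞 : Finpartition (univ : Finset V)) : Prop :=
  ∀ s ∈ T.subtrees, SingleGrowth 𝒞 s.leafSet


namespace Cotree

variable {V : Type u}

lemma mem_leavesAux {v : V} : ∀ {ts : List (Cotree V)},
    v ∈ leavesAux ts ↔ ∃ t ∈ ts, v ∈ t.leaves := by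
  intro ts
  induction ts with
  | nil => simp [leavesAux]
  | cons t ts ih => simp [leavesAux, ih]

lemma mem_subtreesAux {u : Cotree V} : ∀ {ts : List (Cotree V)},
    u ∈ subtreesAux ts ↔ ∃ t ∈ ts, u ∈ t.subtrees := by
  intro ts
  induction ts with
  | nil => simp [subtreesAux]
  | cons t ts ih => simp [subtreesAux, ih]

lemma self_mem_subtrees (t : Cotree V) : t ∈ t.subtrees := by
  cases t with
  | leaf v => simp [subtrees]
  | node b ts => simp [subtrees]

lemma sizeOf_lt_of_mem_children [SizeOf V] {c : Cotree V} {b : Bool} {ts : List (Cotree V)}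
    (h : c ∈ ts) : sizeOf c < sizeOf (Cotree.node b ts) := by
  have h1 : sizeOf c < sizeOf ts := List.sizeOf_lt_of_mem h
  have h2 : sizeOf (Cotree.node b ts) = 1 + sizeOf b + sizeOf ts := by
    simp [Cotree.node.sizeOf_spec]
  omega

/-- Strong induction on `sizeOf` for cotrees. -/
lemma strong_ind {P : Cotree V → Prop}
    (h : ∀ t : Cotree V, (∀ c : Cotree V, sizeOf c < sizeOf t → P c) → P t) :
    ∀ t, P t := by
  have key : ∀ (n : ℕ) (t : Cotree V), sizeOf t < n → P t := by
    intro n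
    induction n with
    | zero => intro t ht; omega
    | succ n ih =>
      intro t ht
      exact h t fun c hc => ih c (by omega)
  intro t
  exact key (sizeOf t + 1) t (by omega)

lemma mem_subtrees_of_child {c : Cotree V} {b : Bool} {ts : List (Cotree V)}
    (h : c ∈ ts) : c ∈ (Cotree.node b ts).subtrees := by
  show c ∈ Cotree.node b ts :: subtreesAux ts
  exact List.mem_cons_of_mem _ (mem_subtreesAux.2 ⟨c, h, self_mem_subtrees c⟩)

lemma subtrees_trans : ∀ (c : Cotree V), ∀ {a b : Cotree V},
    a ∈ b.subtrees → b ∈ c.subtrees → a ∈ c.subtrees := by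
  refine strong_ind ?_
  intro c ih a b hab hbc
  cases c with
  | leaf v =>
    simp only [subtrees, List.mem_singleton] at hbc
    subst hbc
    exact hab
  | node bo ts =>
    rcases List.mem_cons.1 hbc with h | h
    · subst h; exact hab
    · obtain ⟨t, ht, hbt⟩ := mem_subtreesAux.1 h
      have : a ∈ t.subtrees := ih t (sizeOf_lt_of_mem_children ht) hab hbt
      exact List.mem_cons_of_mem _ (mem_subtreesAux.2 ⟨t, ht, this⟩)

lemma leaves_subset : ∀ (b : Cotree V), ∀ {a : Cotree V},
    a ∈ b.subtrees → ∀ {v : V}, v ∈ a.leaves → v ∈ b.leaves := by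
  refine strong_ind ?_
  intro b ih a hab v hv
  cases b with
  | leaf w =>
    simp only [subtrees, List.mem_singleton] at hab
    subst hab; exact hv
  | node bo ts =>
    rcases List.mem_cons.1 hab with h | h
    · subst h; exact hv
    · obtain ⟨t, ht, hat⟩ := mem_subtreesAux.1 h
      have : v ∈ t.leaves := ih t (sizeOf_lt_of_mem_children ht) hat hv
      show v ∈ leavesAux ts
      exact mem_leavesAux.2 ⟨t, ht, this⟩

lemma nodup_child {ts : List (Cotree V)} (h : (leavesAux ts).Nodup) :
    ∀ {c : Cotree V}, c ∈ ts → c.leaves.Nodup := by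
  induction ts with
  | nil => intro c hc; simp at hc
  | cons t ts ih =>
    intro c hc
    rw [show leavesAux (t :: ts) = t.leaves ++ leavesAux ts from rfl, List.nodup_append] at h
    rcases List.mem_cons.1 hc with h1 | h1
    · subst h1; exact h.1
    · exact ih h.2.1 h1

/-- Distinct children of a node with nodup leaves have disjoint leaf sets. -/
lemma child_eq_of_mem_leaves {ts : List (Cotree V)} (h : (leavesAux ts).Nodup) :
    ∀ {c₁ c₂ : Cotree V} {v : V}, c₁ ∈ ts → c₂ ∈ ts → v ∈ c₁.leaves → v ∈ c₂.leaves → c₁ = c₂ := by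
  induction ts with
  | nil => intro c₁ c₂ v h1; simp at h1
  | cons t ts ih =>
    intro c₁ c₂ v h1 h2 hv1 hv2
    rw [show leavesAux (t :: ts) = t.leaves ++ leavesAux ts from rfl, List.nodup_append] at h
    rcases List.mem_cons.1 h1 with h1' | h1' <;> rcases List.mem_cons.1 h2 with h2' | h2'
    · subst h1'; subst h2'; rfl
    · subst h1'
      exact absurd (mem_leavesAux.2 ⟨c₂, h2', hv2⟩) (fun hm => h.2.2 v hv1 v hm rfl)
    · subst h2'
      exact absurd (mem_leavesAux.2 ⟨c₁, h1', hv1⟩) (fun hm => h.2.2 v hv2 v hm rfl)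
    · exact ih h.2.1 h1' h2' hv1 hv2

lemma nodup_subtree : ∀ (T : Cotree V), T.leaves.Nodup →
    ∀ {t : Cotree V}, t ∈ T.subtrees → t.leaves.Nodup := by
  refine strong_ind ?_
  intro T ih hnd t ht
  cases T with
  | leaf w =>
    simp only [subtrees, List.mem_singleton] at ht
    subst ht; exact hnd
  | node bo ts =>
    rcases List.mem_cons.1 ht with h | h
    · subst h; exact hnd
    · obtain ⟨c, hc, htc⟩ := mem_subtreesAux.1 h
      exact ih c (sizeOf_lt_of_mem_children hc) (nodup_child hnd hc) htc

/-- Two subtrees sharing a leaf are comparable. -/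
lemma comparable_of_mem_leaves : ∀ (T : Cotree V), T.leaves.Nodup →
    ∀ {a b : Cotree V} {v : V}, a ∈ T.subtrees → b ∈ T.subtrees →
    v ∈ a.leaves → v ∈ b.leaves → a ∈ b.subtrees ∨ b ∈ a.subtrees := by
  refine strong_ind ?_
  intro T ih hnd a b v ha hb hva hvb
  cases T with
  | leaf w =>
    simp only [subtrees, List.mem_singleton] at ha hb
    subst ha; subst hb
    exact Or.inl (self_mem_subtrees _)
  | node bo ts =>
    rcases List.mem_cons.1 ha with h1 | h1
    · subst h1; exact Or.inr hb
    · rcases List.mem_cons.1 hb with h2 | h2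
      · subst h2; exact Or.inl ha
      · obtain ⟨c₁, hc₁, hac⟩ := mem_subtreesAux.1 h1
        obtain ⟨c₂, hc₂, hbc⟩ := mem_subtreesAux.1 h2
        have hv1 : v ∈ c₁.leaves := leaves_subset c₁ hac hva
        have hv2 : v ∈ c₂.leaves := leaves_subset c₂ hbc hvb
        have : c₁ = c₂ := child_eq_of_mem_leaves hnd hc₁ hc₂ hv1 hv2
        subst this
        exact ih c₁ (sizeOf_lt_of_mem_children hc₁) (nodup_child hnd hc₁) hac hbc hva hvb

end Cotree
section ListHelpers

variable {α : Type*}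

lemma countP_lt_of_witness {l : List α} {p q : α → Bool}
    (hpq : ∀ a ∈ l, p a → q a) {x : α} (hx : x ∈ l) (hqx : q x) (hpx : ¬ p x) :
    l.countP p < l.countP q := by
  induction l with
  | nil => simp at hx
  | cons a l ih =>
    rcases List.mem_cons.1 hx with h | h
    · subst h
      rw [List.countP_cons, List.countP_cons]
      have h1 : l.countP p ≤ l.countP q :=
        List.countP_mono_left (fun a ha => hpq a (List.mem_cons_of_mem _ ha))
      simp only [hqx, hpx]
      simp only [Bool.false_eq_true, if_false, if_true]
      omega
    · rw [List.countP_cons, List.countP_cons]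
      have h1 := ih (fun a ha hpa => hpq a (List.mem_cons_of_mem _ ha) hpa) h
      have h2 : (if p a then 1 else 0) ≤ if q a then 1 else 0 := by
        by_cases hpa : p a
        · simp [hpa, hpq a List.mem_cons_self hpa]
        · simp [hpa]
      omega

lemma mem_imp_of_countP_le {l : List α} {p q : α → Bool}
    (hpq : ∀ a ∈ l, p a → q a) (hc : l.countP q ≤ l.countP p) :
    ∀ a ∈ l, q a → p a := by
  intro a ha hqa
  by_contra hpa
  exact absurd hc (by simpa using countP_lt_of_witness hpq ha hqa hpa)

lemma two_le_filter_length {l : List α} {p : α → Bool} {a b : α}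
    (ha : a ∈ l) (hb : b ∈ l) (hab : a ≠ b) (hpa : p a) (hpb : p b) :
    2 ≤ (l.filter p).length := by
  induction l with
  | nil => simp at ha
  | cons c l ih =>
    rcases List.mem_cons.1 ha with h1 | h1 <;> rcases List.mem_cons.1 hb with h2 | h2
    · subst h1; subst h2; exact absurd rfl hab
    · subst h1
      have : b ∈ l.filter p := List.mem_filter.2 ⟨h2, hpb⟩
      have h3 : 0 < (l.filter p).length := List.length_pos_of_mem this
      simp only [List.filter_cons, hpa, if_true, List.length_cons]
      omega
    · subst h2
      have : a ∈ l.filter p := List.mem_filter.2 ⟨h1, hpa⟩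
      have h3 : 0 < (l.filter p).length := List.length_pos_of_mem this
      simp only [List.filter_cons, hpb, if_true, List.length_cons]
      omega
    · have := ih h1 h2
      rw [List.filter_cons]
      by_cases hc : p c
      · simp only [hc, if_true]
        simp only [List.length_cons]
        omega
      · simpa [hc] using this

end ListHelpers

namespace Cotree

variable {V : Type u}

open scoped Classical

/-- `v` is a leaf child of a 1-labeled strict ancestor of `s` in `T`. -/
def ATy (T s : Cotree V) (v : V) : Prop :=
  ∃ s' ∈ T.subtrees, s' ≠ s ∧ s ∈ s'.subtrees ∧ s'.oneLeafChild v

/-- Depth of a vertex relative to the chain of ancestors of `s` in `T`: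
the number of ancestors-or-self of `s` whose leaf set contains `v`. -/
noncomputable def dep (T s : Cotree V) (v : V) : ℕ :=
  T.subtrees.countP (fun n' => decide (s ∈ n'.subtrees ∧ v ∈ n'.leaves))

end Cotree
namespace Cotree

variable {V : Type u} {G : SimpleGraph V} {T s : Cotree V}

open scoped Classical

lemma adj_of_leaf_child (hT : IsCotree T G) {ts : List (Cotree V)}
    (hmem : Cotree.node true ts ∈ T.subtrees) {α w : V} (hα : Cotree.leaf α ∈ ts)
    (hw : w ∈ (Cotree.node true ts).leaves) (hne : w ≠ α) : G.Adj α w := by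
  obtain ⟨c, hc, hwc⟩ := mem_leavesAux.1 (show w ∈ leavesAux ts from hw)
  have hcne : Cotree.leaf α ≠ c := by
    intro h
    rw [← h] at hwc
    simp [leaves] at hwc
    exact hne hwc
  exact (hT.adj α w).2 ⟨ts, hmem, Cotree.leaf α, hα, c, hc, hcne, by simp [leaves], hwc⟩

section Main

variable (hT : IsCotree T G) (hTPG : TPGCotree T) (hs : s ∈ T.subtrees)
variable {x y : V} (hxs : x ∈ s.leaves) (hys : y ∈ s.leaves) (hxy : x ≠ y)

include hxs hys hxy in
lemma not_leaf_of_supset {c : Cotree V} (hc : s ∈ c.subtrees) {u : V} :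
    c ≠ Cotree.leaf u := by
  intro h
  subst h
  have h1 : x ∈ (Cotree.leaf u).leaves := leaves_subset _ hc hxs
  have h2 : y ∈ (Cotree.leaf u).leaves := leaves_subset _ hc hys
  simp [leaves] at h1 h2
  exact hxy (h1.trans h2.symm)

lemma child_of_strict {b : Bool} {ts : List (Cotree V)}
    (hn : s ∈ (Cotree.node b ts).subtrees) (hne : Cotree.node b ts ≠ s) :
    ∃ c ∈ ts, s ∈ c.subtrees := by
  rcases List.mem_cons.1 hn with h | h
  · exact absurd h.symm hne
  · exact mem_subtreesAux.1 h

include hT hs hxs hys hxy in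
lemma adj_of_ATy {α : V} (hATy : ATy T s α) {w : V} {n' : Cotree V}
    (hn' : n' ∈ T.subtrees) (hsn' : s ∈ n'.subtrees) (hw : w ∈ n'.leaves)
    (hα : α ∉ n'.leaves) : G.Adj α w := by
  obtain ⟨s₀, hs₀T, hs₀ne, hss₀, holc⟩ := hATy
  cases s₀ with
  | leaf u => exact absurd holc (by simp [oneLeafChild])
  | node b ts₀ =>
    cases b with
    | false => exact absurd holc (by simp [oneLeafChild])
    | true =>
      have holc' : Cotree.leaf α ∈ ts₀ := holc
      have hαs₀ : α ∈ (Cotree.node true ts₀).leaves :=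
        mem_leavesAux.2 ⟨Cotree.leaf α, holc', by simp [leaves]⟩
      have hx1 : x ∈ n'.leaves := leaves_subset _ hsn' hxs
      have hx2 : x ∈ (Cotree.node true ts₀).leaves := leaves_subset _ hss₀ hxs
      rcases comparable_of_mem_leaves T hT.nodup hn' hs₀T hx1 hx2 with h | h
      · exact adj_of_leaf_child hT hs₀T holc' (leaves_subset _ h hw)
          (fun he => hα (he ▸ hw))
      · exact absurd (leaves_subset _ h hαs₀) hα

include hT hTPG hs hxs hys hxy in
lemma not_adj_of_not_ATy {b : V} (hB : ¬ ATy T s b) {w : V} {n' : Cotree V}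
    (hn' : n' ∈ T.subtrees) (hsn' : s ∈ n'.subtrees) (hw : w ∈ n'.leaves)
    (hb : b ∉ n'.leaves) : ¬ G.Adj b w := by
  intro hadj
  obtain ⟨ts, hmem, t₁, ht₁, t₂, ht₂, hne12, hbt₁, hwt₂⟩ := (hT.adj b w).1 hadj
  have hbn : b ∈ (Cotree.node true ts).leaves :=
    leaves_subset _ (mem_subtrees_of_child ht₁) hbt₁
  have hwn : w ∈ (Cotree.node true ts).leaves :=
    leaves_subset _ (mem_subtrees_of_child ht₂) hwt₂
  rcases comparable_of_mem_leaves T hT.nodup hmem hn' hwn hw with h | h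
  · exact hb (leaves_subset _ h hbn)
  · -- n' ∈ subtrees (node true ts)
    have hsn : s ∈ (Cotree.node true ts).subtrees := subtrees_trans _ hsn' h
    have hnne : Cotree.node true ts ≠ s := by
      intro he
      exact hb (leaves_subset _ hsn' (he ▸ hbn))
    have hn'ne : n' ≠ Cotree.node true ts := by
      intro he
      exact hb (he ▸ hbn)
    have h' : n' ∈ subtreesAux ts := by
      rcases List.mem_cons.1 h with h1 | h1
      · exact absurd h1 hn'ne
      · exact h1
    obtain ⟨c', hc', hn'c'⟩ := mem_subtreesAux.1 h'
    have hnodupn : (leavesAux ts).Nodup := nodup_subtree T hT.nodup hmem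
    have hsc' : s ∈ c'.subtrees := subtrees_trans _ hsn' hn'c'
    by_cases ht₁c' : t₁ = c'
    · -- w in both t₂ and c' = t₁
      have hwc' : w ∈ c'.leaves := leaves_subset _ hn'c' hw
      rw [← ht₁c'] at hwc'
      exact hne12 (child_eq_of_mem_leaves hnodupn ht₁ ht₂ hwc' hwt₂)
    · by_cases ht₁leaf : ∃ u, t₁ = Cotree.leaf u
      · obtain ⟨u, hu⟩ := ht₁leaf
        subst hu
        simp [leaves] at hbt₁
        subst hbt₁
        exact hB ⟨Cotree.node true ts, hmem, hnne, hsn, ht₁⟩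
      · have h2 : 2 ≤ (ts.filter fun t => !t.isLeaf).length := by
          apply two_le_filter_length ht₁ hc' ht₁c'
          · cases t₁ with
            | leaf u => exact absurd ⟨u, rfl⟩ ht₁leaf
            | node b' ts' => simp [isLeaf]
          · cases c' with
            | leaf u => exact absurd rfl (not_leaf_of_supset hxs hys hxy hsc')
            | node b' ts' => simp [isLeaf]
        exact absurd (hTPG ts hmem) (by omega)

include hxs in
lemma dep_lt_witness {v w : V} (h : dep T s v < dep T s w) :
    ∃ n' ∈ T.subtrees, s ∈ n'.subtrees ∧ w ∈ n'.leaves ∧ v ∉ n'.leaves := by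
  by_contra hcon
  push_neg at hcon
  have : T.subtrees.countP (fun n' => decide (s ∈ n'.subtrees ∧ w ∈ n'.leaves)) ≤
      T.subtrees.countP (fun n' => decide (s ∈ n'.subtrees ∧ v ∈ n'.leaves)) := by
    apply List.countP_mono_left
    intro n' hn' hp
    simp only [decide_eq_true_eq] at hp ⊢
    exact ⟨hp.1, hcon n' hn' hp.1 hp.2⟩
  exact absurd h (by unfold dep; omega)

include hs hxs in
lemma dep_lt_of_X {v w : V} (hv : v ∉ s.leaves) (hw : w ∈ s.leaves) :
    dep T s v < dep T s w := by
  apply countP_lt_of_witness (x := s)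
  · intro n' _ hp
    simp only [decide_eq_true_eq] at hp ⊢
    exact ⟨hp.1, leaves_subset _ hp.1 hw⟩
  · exact hs
  · simp only [decide_eq_true_eq]
    exact ⟨self_mem_subtrees s, hw⟩
  · simp only [decide_eq_true_eq, not_and]
    intro _
    exact hv

include hT hxs in
lemma dep_eq_mem {v w : V} (h : dep T s v = dep T s w) {n₁ : Cotree V}
    (hn₁ : n₁ ∈ T.subtrees) (hsn₁ : s ∈ n₁.subtrees) (hv : v ∈ n₁.leaves) :
    w ∈ n₁.leaves := by
  by_contra hw
  have hmono : ∀ n₂ ∈ T.subtrees,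
      (fun n' => decide (s ∈ n'.subtrees ∧ w ∈ n'.leaves)) n₂ = true →
      (fun n' => decide (s ∈ n'.subtrees ∧ v ∈ n'.leaves)) n₂ = true := by
    intro n₂ hn₂ hp
    simp only [decide_eq_true_eq] at hp ⊢
    refine ⟨hp.1, ?_⟩
    have hx1 : x ∈ n₁.leaves := leaves_subset _ hsn₁ hxs
    have hx2 : x ∈ n₂.leaves := leaves_subset _ hp.1 hxs
    rcases comparable_of_mem_leaves T hT.nodup hn₁ hn₂ hx1 hx2 with hc | hc
    · exact leaves_subset _ hc hv
    · exact absurd (leaves_subset _ hc hp.2) hw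
  have : dep T s w < dep T s v := by
    apply countP_lt_of_witness hmono hn₁
    · simp only [decide_eq_true_eq]
      exact ⟨hsn₁, hv⟩
    · simp only [decide_eq_true_eq, not_and]
      intro _
      exact hw
  omega

include hT hs hxs hys hxy in
lemma adj_of_ATy_dep_lt {α w : V} (hATy : ATy T s α) (h : dep T s α < dep T s w) :
    G.Adj α w := by
  obtain ⟨n', hn', hsn', hw, hα⟩ := dep_lt_witness hxs h
  exact adj_of_ATy hT hs hxs hys hxy hATy hn' hsn' hw hα

include hT hTPG hs hxs hys hxy in
lemma not_adj_of_not_ATy_dep_lt {b w : V} (hB : ¬ ATy T s b) (h : dep T s b < dep T s w) :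
    ¬ G.Adj b w := by
  obtain ⟨n', hn', hsn', hw, hb⟩ := dep_lt_witness hxs h
  exact not_adj_of_not_ATy hT hTPG hs hxs hys hxy hB hn' hsn' hw hb

include hT hs hxs hys hxy in
lemma adj_of_ATy_dep_eq {α w : V} (hATy : ATy T s α) (h : dep T s α = dep T s w)
    (hne : w ≠ α) : G.Adj α w := by
  obtain ⟨s₀, hs₀T, hs₀ne, hss₀, holc⟩ := hATy
  cases s₀ with
  | leaf u => exact absurd holc (by simp [oneLeafChild])
  | node b ts₀ =>
    cases b with
    | false => exact absurd holc (by simp [oneLeafChild])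
    | true =>
      have holc' : Cotree.leaf α ∈ ts₀ := holc
      have hαs₀ : α ∈ (Cotree.node true ts₀).leaves :=
        mem_leavesAux.2 ⟨Cotree.leaf α, holc', by simp [leaves]⟩
      have hw : w ∈ (Cotree.node true ts₀).leaves := dep_eq_mem hT hxs h hs₀T hss₀ hαs₀
      exact adj_of_leaf_child hT hs₀T holc' hw hne

include hT hTPG hs hxs hys hxy in
lemma ATy_of_dep_eq {α w : V} (hATy : ATy T s α) (h : dep T s α = dep T s w)
    (hw : w ∉ s.leaves) : ATy T s w := by
  obtain ⟨s₀, hs₀T, hs₀ne, hss₀, holc⟩ := hATy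
  cases s₀ with
  | leaf u => exact absurd holc (by simp [oneLeafChild])
  | node b ts₀ =>
    cases b with
    | false => exact absurd holc (by simp [oneLeafChild])
    | true =>
      have holc' : Cotree.leaf α ∈ ts₀ := holc
      have hαs₀ : α ∈ (Cotree.node true ts₀).leaves :=
        mem_leavesAux.2 ⟨Cotree.leaf α, holc', by simp [leaves]⟩
      have hw0 : w ∈ (Cotree.node true ts₀).leaves := dep_eq_mem hT hxs h hs₀T hss₀ hαs₀
      obtain ⟨c, hc, hwc⟩ := mem_leavesAux.1 (show w ∈ leavesAux ts₀ from hw0)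
      obtain ⟨cs, hcs, hscs⟩ := child_of_strict hss₀ hs₀ne
      have hnodup0 : (leavesAux ts₀).Nodup := nodup_subtree T hT.nodup hs₀T
      have hcsT : cs ∈ T.subtrees := subtrees_trans _ (mem_subtrees_of_child hcs) hs₀T
      by_cases hccs : c = cs
      · subst hccs
        by_cases hcss : c = s
        · exact absurd (hcss ▸ hwc) hw
        · -- c is a strict ancestor of s containing w; α must also be in it
          have hα : α ∈ c.leaves := dep_eq_mem hT hxs h.symm hcsT hscs hwc
          have : Cotree.leaf α = c :=
            child_eq_of_mem_leaves hnodup0 holc' hc (by simp [leaves]) hα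
          exact absurd this.symm (not_leaf_of_supset hxs hys hxy hscs)
      · by_cases hcleaf : ∃ u, c = Cotree.leaf u
        · obtain ⟨u, hu⟩ := hcleaf
          subst hu
          simp [leaves] at hwc
          subst hwc
          exact ⟨Cotree.node true ts₀, hs₀T, hs₀ne, hss₀, hc⟩
        · have h2 : 2 ≤ (ts₀.filter fun t => !t.isLeaf).length := by
            apply two_le_filter_length hc hcs hccs
            · cases c with
              | leaf u => exact absurd ⟨u, rfl⟩ hcleaf
              | node b' ts' => simp [isLeaf]
            · cases cs with
              | leaf u => exact absurd rfl (not_leaf_of_supset hxs hys hxy hscs)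
              | node b' ts' => simp [isLeaf]
          exact absurd (hTPG ts₀ hs₀T) (by omega)

end Main

end Cotree
section Cost

open scoped Classical

variable {V : Type u} [Fintype V] [DecidableEq V]

/-- The pair `e` lies inside a single part of `P`. -/
def togE (P : Finpartition (univ : Finset V)) (e : Sym2 V) : Prop :=
  ∃ C ∈ P.parts, ∀ v ∈ e, v ∈ C

/-- Pointwise cost weight. -/
noncomputable def wgt (G : SimpleGraph V) (P : Finpartition (univ : Finset V))
    (e : Sym2 V) : ℕ :=
  (if e ∈ G.edgeSet ∧ ¬ togE P e then 1 else 0) +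
  (if e ∈ Gᶜ.edgeSet ∧ togE P e then 1 else 0)

lemma forall_mem_sym2 {p : V → Prop} {a b : V} : (∀ v ∈ s(a, b), p v) ↔ p a ∧ p b := by
  constructor
  · intro h
    exact ⟨h a (Sym2.mem_mk_left a b), h b (Sym2.mem_mk_right a b)⟩
  · rintro ⟨ha, hb⟩ v hv
    rcases Sym2.mem_iff.1 hv with h | h
    · exact h ▸ ha
    · exact h ▸ hb

lemma cost_eq_sum (G : SimpleGraph V) (P : Finpartition (univ : Finset V)) :
    cost G P = ∑ e : Sym2 V, wgt G P e := by
  unfold cost costOn wgt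
  rw [Finset.sum_add_distrib]
  congr 1
  · rw [Set.ncard_eq_toFinset_card', Set.toFinset_setOf, Finset.card_filter]
    apply Finset.sum_congr rfl
    intro e _
    congr 1
    simp only [Finset.mem_univ, imp_true_iff, true_and, eq_iff_iff]
    unfold togE
    tauto
  · rw [Set.ncard_eq_toFinset_card', Set.toFinset_setOf, Finset.card_filter]
    apply Finset.sum_congr rfl
    intro e _
    congr 1

lemma wgt_of_tog {G : SimpleGraph V} {P : Finpartition (univ : Finset V)} {e : Sym2 V}
    (h : togE P e) : wgt G P e = if e ∈ Gᶜ.edgeSet then 1 else 0 := by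
  unfold wgt
  simp [h]

lemma wgt_of_not_tog {G : SimpleGraph V} {P : Finpartition (univ : Finset V)} {e : Sym2 V}
    (h : ¬ togE P e) : wgt G P e = if e ∈ G.edgeSet then 1 else 0 := by
  unfold wgt
  simp [h]

/-- Count of adjacent pairs in `S ×ˢ T`. -/
noncomputable def eCnt (G : SimpleGraph V) (S T : Finset V) : ℕ :=
  ((S ×ˢ T).filter fun p => G.Adj p.1 p.2).card

/-- Count of non-adjacent pairs in `S ×ˢ T`. -/
noncomputable def neCnt (G : SimpleGraph V) (S T : Finset V) : ℕ :=
  ((S ×ˢ T).filter fun p => ¬ G.Adj p.1 p.2).card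

lemma eCnt_add_neCnt (G : SimpleGraph V) (S T : Finset V) :
    eCnt G S T + neCnt G S T = S.card * T.card := by
  unfold eCnt neCnt
  rw [Finset.card_filter_add_card_filter_not, Finset.card_product]

lemma mem_pairImage {S T : Finset V} {e : Sym2 V} :
    e ∈ (S ×ˢ T).image (fun p => s(p.1, p.2)) ↔ ∃ a ∈ S, ∃ b ∈ T, e = s(a, b) := by
  simp only [Finset.mem_image, Finset.mem_product, Prod.exists]
  constructor
  · rintro ⟨a, b, ⟨ha, hb⟩, he⟩
    exact ⟨a, ha, b, hb, he.symm⟩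
  · rintro ⟨a, ha, b, hb, he⟩
    exact ⟨a, b, ⟨ha, hb⟩, he.symm⟩

lemma sum_pairImage {S T : Finset V} (hST : Disjoint S T) (f : Sym2 V → ℕ) :
    ∑ e ∈ (S ×ˢ T).image (fun p => s(p.1, p.2)), f e = ∑ p ∈ S ×ˢ T, f s(p.1, p.2) := by
  apply Finset.sum_image
  intro p hp q hq he
  simp only [Finset.mem_coe, Finset.mem_product] at hp hq
  rcases Sym2.eq_iff.1 he with ⟨h1, h2⟩ | ⟨h1, h2⟩
  · exact Prod.ext h1 h2
  · exact absurd (h1 ▸ hp.1) (Finset.disjoint_left.1 hST · hq.2)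

lemma eCnt_eq_sum (G : SimpleGraph V) (S T : Finset V) :
    eCnt G S T = ∑ p ∈ S ×ˢ T, if s(p.1, p.2) ∈ G.edgeSet then 1 else 0 := by
  unfold eCnt
  rw [Finset.card_filter]
  apply Finset.sum_congr rfl
  intro p _
  congr 1

lemma neCnt_eq_sum (G : SimpleGraph V) {S T : Finset V} (hST : Disjoint S T) :
    neCnt G S T = ∑ p ∈ S ×ˢ T, if s(p.1, p.2) ∈ Gᶜ.edgeSet then 1 else 0 := by
  unfold neCnt
  rw [Finset.card_filter]
  apply Finset.sum_congr rfl
  intro p hp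
  simp only [Finset.mem_product] at hp
  congr 1
  simp only [SimpleGraph.mem_edgeSet, SimpleGraph.compl_adj, eq_iff_iff]
  have : p.1 ≠ p.2 := fun h => Finset.disjoint_left.1 hST hp.1 (h ▸ hp.2)
  tauto

lemma sum_ite_mem_univ (m : Finset (Sym2 V)) (f : Sym2 V → ℕ) :
    ∑ e : Sym2 V, (if e ∈ m then f e else 0) = ∑ e ∈ m, f e := by
  rw [Finset.sum_ite_mem, Finset.univ_inter]

end Cost
section Surgery

open scoped Classical

variable {V : Type u} [Fintype V] [DecidableEq V]

lemma cost_split (G : SimpleGraph V) (P : Finpartition (univ : Finset V)) {C U : Finset V}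
    (hC : C ∈ P.parts) (hU : U ⊆ C) (hUne : U.Nonempty) (hWne : (C \ U).Nonempty) :
    ∃ Q : Finpartition (univ : Finset V),
      cost G Q + neCnt G U (C \ U) = cost G P + eCnt G U (C \ U) := by
  set W := C \ U with hW
  have hdisjUW : Disjoint U W := Finset.disjoint_sdiff
  -- the new parts
  set N : Finset (Finset V) := insert U (insert W (P.parts.erase C)) with hN
  have hmemN : ∀ {E : Finset V}, E ∈ N ↔ E = U ∨ E = W ∨ (E ∈ P.parts ∧ E ≠ C) := by
    intro E
    simp only [hN, Finset.mem_insert, Finset.mem_erase]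
    tauto
  have hUC : ∀ v ∈ U, v ∈ C := fun v hv => hU hv
  have hWC : ∀ v ∈ W, v ∈ C := fun v hv => (Finset.mem_sdiff.1 hv).1
  -- supIndep
  have hsi : N.SupIndep id := by
    rw [Finset.supIndep_iff_pairwiseDisjoint]
    intro A hA B hB hAB
    simp only [Finset.mem_coe] at hA hB
    have key : ∀ A' B' : Finset V, A' ∈ N → B' ∈ N → A' ≠ B' →
        (A' = U ∨ A' = W → Disjoint (id A') (id B')) := by
      intro A' B' hA' hB' hne hcase
      have hsub : A' ⊆ C := by
        rcases hcase with h | h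
        · rw [h]; exact hU
        · rw [h]; intro v hv; exact hWC v hv
      rcases hmemN.1 hB' with h | h | ⟨hBp, hBC⟩
      · rcases hcase with h' | h'
        · exact absurd (h'.trans h.symm) hne
        · rw [h, h']; exact (Finset.disjoint_sdiff).symm
      · rcases hcase with h' | h'
        · rw [h, h']; exact Finset.disjoint_sdiff
        · exact absurd (h'.trans h.symm) hne
      · have : Disjoint C B' := P.disjoint hC hBp (fun h => hBC h.symm)
        exact this.mono_left hsub
    rcases hmemN.1 hA with h | h | ⟨hAp, hAC⟩
    · exact key A B hA hB hAB (Or.inl h)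
    · exact key A B hA hB hAB (Or.inr h)
    · rcases hmemN.1 hB with h | h | ⟨hBp, hBC⟩
      · exact ((key B A hB hA hAB.symm (Or.inl h)).symm)
      · exact ((key B A hB hA hAB.symm (Or.inr h)).symm)
      · exact P.disjoint hAp hBp hAB
  -- sup
  have hsup : N.sup id = univ := by
    have h1 : U ⊔ W = C := by
      rw [Finset.sup_eq_union]
      exact Finset.union_sdiff_of_subset hU
    have h2 : P.parts = insert C (P.parts.erase C) := (Finset.insert_erase hC).symm
    have h3 : P.parts.sup id = univ := P.sup_parts
    rw [h2, Finset.sup_insert] at h3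
    rw [hN, Finset.sup_insert, Finset.sup_insert, ← sup_assoc]
    simp only [id_eq] at h3 ⊢
    rw [h1]
    exact h3
  have hbot : ⊥ ∉ N := by
    intro h
    rcases hmemN.1 h with h | h | ⟨hp, _⟩
    · exact hUne.ne_empty h.symm
    · exact hWne.ne_empty h.symm
    · exact P.bot_notMem hp
  refine ⟨⟨N, hsi, hsup, hbot⟩, ?_⟩
  set Q : Finpartition (univ : Finset V) := ⟨N, hsi, hsup, hbot⟩ with hQ
  have hQparts : Q.parts = N := rfl
  -- mixed pairs
  set m : Finset (Sym2 V) := (U ×ˢ W).image (fun p => s(p.1, p.2)) with hm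
  -- togetherness analysis
  have htogPm : ∀ e ∈ m, togE P e := by
    intro e he
    obtain ⟨a, ha, b, hb, rfl⟩ := mem_pairImage.1 he
    exact ⟨C, hC, forall_mem_sym2.2 ⟨hUC a ha, hWC b hb⟩⟩
  have htogQm : ∀ e ∈ m, ¬ togE Q e := by
    intro e he htog
    obtain ⟨a, ha, b, hb, rfl⟩ := mem_pairImage.1 he
    obtain ⟨E, hE, hab⟩ := htog
    obtain ⟨haE, hbE⟩ := forall_mem_sym2.1 hab
    rcases hmemN.1 hE with h | h | ⟨hEp, hEC⟩
    · subst h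
      exact (Finset.disjoint_left.1 hdisjUW hbE) hb
    · subst h
      exact (Finset.disjoint_left.1 hdisjUW ha) haE
    · exact hEC (P.eq_of_mem_parts hEp hC haE (hUC a ha))
  have htogiff : ∀ e : Sym2 V, e ∉ m → (togE Q e ↔ togE P e) := by
    intro e he
    induction e with
    | _ a b =>
      constructor
      · rintro ⟨E, hE, hab⟩
        obtain ⟨haE, hbE⟩ := forall_mem_sym2.1 hab
        rcases hmemN.1 hE with h | h | ⟨hEp, _⟩
        · subst h
          exact ⟨C, hC, forall_mem_sym2.2 ⟨hUC a haE, hUC b hbE⟩⟩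
        · subst h
          exact ⟨C, hC, forall_mem_sym2.2 ⟨hWC a haE, hWC b hbE⟩⟩
        · exact ⟨E, hEp, hab⟩
      · rintro ⟨E, hE, hab⟩
        obtain ⟨haE, hbE⟩ := forall_mem_sym2.1 hab
        by_cases hEC : E = C
        · subst hEC
          by_cases haU : a ∈ U <;> by_cases hbU : b ∈ U
          · exact ⟨U, hmemN.2 (Or.inl rfl), forall_mem_sym2.2 ⟨haU, hbU⟩⟩
          · exact absurd (mem_pairImage.2 ⟨a, haU, b, Finset.mem_sdiff.2 ⟨hbE, hbU⟩, rfl⟩) he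
          · exact absurd (mem_pairImage.2 ⟨b, hbU, a, Finset.mem_sdiff.2 ⟨haE, haU⟩, Sym2.eq_swap⟩) he
          · exact ⟨W, hmemN.2 (Or.inr (Or.inl rfl)),
              forall_mem_sym2.2 ⟨Finset.mem_sdiff.2 ⟨haE, haU⟩, Finset.mem_sdiff.2 ⟨hbE, hbU⟩⟩⟩
        · exact ⟨E, hmemN.2 (Or.inr (Or.inr ⟨hE, hEC⟩)), hab⟩
  -- the cost identity
  rw [cost_eq_sum, cost_eq_sum, neCnt_eq_sum G hdisjUW, eCnt_eq_sum,
    ← sum_pairImage hdisjUW (fun e => if e ∈ Gᶜ.edgeSet then 1 else 0),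
    ← sum_pairImage hdisjUW (fun e => if e ∈ G.edgeSet then 1 else 0), ← hm,
    ← sum_ite_mem_univ m (fun e => if e ∈ Gᶜ.edgeSet then 1 else 0),
    ← sum_ite_mem_univ m (fun e => if e ∈ G.edgeSet then 1 else 0),
    ← Finset.sum_add_distrib, ← Finset.sum_add_distrib]
  apply Finset.sum_congr rfl
  intro e _
  by_cases hem : e ∈ m
  · rw [if_pos hem, if_pos hem, wgt_of_not_tog (htogQm e hem), wgt_of_tog (htogPm e hem)]
    exact add_comm _ _
  · rw [if_neg hem, if_neg hem]
    have := htogiff e hem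
    unfold wgt
    simp only [this]

end Surgery
section Surgery2

open scoped Classical

variable {V : Type u} [Fintype V] [DecidableEq V]

lemma cost_move (G : SimpleGraph V) (P : Finpartition (univ : Finset V)) {C D M : Finset V}
    (hC : C ∈ P.parts) (hD : D ∈ P.parts) (hCD : C ≠ D) (hM : M ⊆ D) :
    ∃ Q : Finpartition (univ : Finset V),
      Q.parts = ((P.parts \ {C, D}) ∪ {C ∪ M, D \ M}).erase ∅ ∧
      cost G Q + eCnt G C M + neCnt G (D \ M) M
        = cost G P + neCnt G C M + eCnt G (D \ M) M := by
  have hdisjCD : Disjoint C D := P.disjoint hC hD hCD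
  have hd1 : Disjoint C M := hdisjCD.mono_right hM
  have hd2 : Disjoint (D \ M) M := Finset.sdiff_disjoint
  set N : Finset (Finset V) := (P.parts \ {C, D}) ∪ {C ∪ M, D \ M} with hN
  have hmemN : ∀ {E : Finset V},
      E ∈ N ↔ (E ∈ P.parts ∧ E ≠ C ∧ E ≠ D) ∨ E = C ∪ M ∨ E = D \ M := by
    intro E
    simp only [hN, Finset.mem_union, Finset.mem_sdiff, Finset.mem_insert,
      Finset.mem_singleton]
    tauto
  have hCne : C.Nonempty := P.nonempty_of_mem_parts hC
  have hsi : N.SupIndep id := by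
    rw [Finset.supIndep_iff_pairwiseDisjoint]
    have key : ∀ A B : Finset V, A ∈ N → B ∈ N → A ≠ B →
        (A = C ∪ M ∨ A = D \ M) → Disjoint (id A) (id B) := by
      intro A B hA hB hne hcase
      rcases hmemN.1 hB with ⟨hBp, hBC, hBD⟩ | h | h
      · have dC : Disjoint C B := P.disjoint hC hBp (fun h => hBC h.symm)
        have dD : Disjoint D B := P.disjoint hD hBp (fun h => hBD h.symm)
        rcases hcase with h | h <;> rw [h]
        · simp only [id_eq, Finset.disjoint_union_left]
          exact ⟨dC, dD.mono_left hM⟩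
        · exact dD.mono_left (Finset.sdiff_subset)
      · rcases hcase with h' | h'
        · exact absurd (h'.trans h.symm) hne
        · rw [h, h']
          simp only [id_eq, Finset.disjoint_union_right]
          exact ⟨(hdisjCD.symm).mono_left Finset.sdiff_subset, hd2⟩
      · rcases hcase with h' | h'
        · rw [h, h']
          simp only [id_eq, Finset.disjoint_union_left]
          exact ⟨hdisjCD.mono_right Finset.sdiff_subset, hd2.symm⟩
        · exact absurd (h'.trans h.symm) hne
    intro A hA B hB hAB
    simp only [Finset.mem_coe] at hA hB
    rcases hmemN.1 hA with ⟨hAp, hAC, hAD⟩ | h | h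
    · rcases hmemN.1 hB with ⟨hBp, _, _⟩ | h | h
      · exact P.disjoint hAp hBp hAB
      · exact (key B A hB hA hAB.symm (Or.inl h)).symm
      · exact (key B A hB hA hAB.symm (Or.inr h)).symm
    · exact key A B hA hB hAB (Or.inl h)
    · exact key A B hA hB hAB (Or.inr h)
  have hsup : N.sup id = univ := by
    have hpairsub : ({C, D} : Finset (Finset V)) ⊆ P.parts := by
      intro E hE
      rcases Finset.mem_insert.1 hE with h | h
      · exact h ▸ hC
      · exact (Finset.mem_singleton.1 h) ▸ hD
    have h2 : (P.parts \ {C, D}) ∪ {C, D} = P.parts := Finset.sdiff_union_of_subset hpairsub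
    have h3 : P.parts.sup id = univ := P.sup_parts
    rw [← h2, Finset.sup_union] at h3
    rw [hN, Finset.sup_union]
    have h4 : ({C ∪ M, D \ M} : Finset (Finset V)).sup id = (C ∪ M) ⊔ (D \ M) := by
      rw [Finset.sup_insert, Finset.sup_singleton]; simp only [id_eq]
    have h5 : ({C, D} : Finset (Finset V)).sup id = C ⊔ D := by
      rw [Finset.sup_insert, Finset.sup_singleton]; simp only [id_eq]
    rw [h4]
    rw [h5] at h3
    have h6 : (C ∪ M) ⊔ (D \ M) = C ⊔ D := by
      simp only [Finset.sup_eq_union]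
      rw [Finset.union_assoc, Finset.union_sdiff_of_subset hM]
    rw [h6]
    exact h3
  refine ⟨Finpartition.ofErase N hsi hsup, ?_, ?_⟩
  · show N.erase ⊥ = N.erase ∅
    rw [Finset.bot_eq_empty]
  set Q : Finpartition (univ : Finset V) := Finpartition.ofErase N hsi hsup with hQ
  have hQmem : ∀ {E : Finset V}, E ∈ Q.parts ↔ E ≠ ∅ ∧ E ∈ N := by
    intro E
    show E ∈ N.erase ⊥ ↔ _
    rw [Finset.bot_eq_empty, Finset.mem_erase]
  set m1 : Finset (Sym2 V) := (C ×ˢ M).image (fun p => s(p.1, p.2)) with hm1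
  set m2 : Finset (Sym2 V) := ((D \ M) ×ˢ M).image (fun p => s(p.1, p.2)) with hm2
  have hm12 : ∀ e ∈ m1, e ∉ m2 := by
    intro e he1 he2
    obtain ⟨a, ha, b, hb, rfl⟩ := mem_pairImage.1 he1
    obtain ⟨a', ha', b', hb', heq⟩ := mem_pairImage.1 he2
    rcases Sym2.eq_iff.1 heq with ⟨h1, h2⟩ | ⟨h1, h2⟩
    · subst h1; subst h2
      exact (Finset.disjoint_left.1 hdisjCD ha) (Finset.mem_sdiff.1 ha').1
    · subst h1; subst h2
      exact (Finset.disjoint_left.1 hd1 ha) hb'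
  have htogPm1 : ∀ e ∈ m1, ¬ togE P e := by
    intro e he htog
    obtain ⟨a, ha, b, hb, rfl⟩ := mem_pairImage.1 he
    obtain ⟨E, hE, hab⟩ := htog
    obtain ⟨haE, hbE⟩ := forall_mem_sym2.1 hab
    have : E = C := P.eq_of_mem_parts hE hC haE ha
    subst this
    exact (Finset.disjoint_left.1 hd1 hbE) hb
  have htogQm1 : ∀ e ∈ m1, togE Q e := by
    intro e he
    obtain ⟨a, ha, b, hb, rfl⟩ := mem_pairImage.1 he
    refine ⟨C ∪ M, hQmem.2 ⟨?_, hmemN.2 (Or.inr (Or.inl rfl))⟩, ?_⟩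
    · exact (hCne.mono Finset.subset_union_left).ne_empty
    · exact forall_mem_sym2.2 ⟨Finset.mem_union_left _ ha, Finset.mem_union_right _ hb⟩
  have htogPm2 : ∀ e ∈ m2, togE P e := by
    intro e he
    obtain ⟨a, ha, b, hb, rfl⟩ := mem_pairImage.1 he
    exact ⟨D, hD, forall_mem_sym2.2 ⟨Finset.sdiff_subset ha, hM hb⟩⟩
  have htogQm2 : ∀ e ∈ m2, ¬ togE Q e := by
    intro e he htog
    obtain ⟨a, ha, b, hb, rfl⟩ := mem_pairImage.1 he
    obtain ⟨E, hE, hab⟩ := htog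
    obtain ⟨haE, hbE⟩ := forall_mem_sym2.1 hab
    rcases hmemN.1 (hQmem.1 hE).2 with ⟨hEp, hEC, hED⟩ | h | h
    · exact hED (P.eq_of_mem_parts hEp hD haE (Finset.sdiff_subset ha))
    · subst h
      rcases Finset.mem_union.1 haE with h' | h'
      · exact (Finset.disjoint_left.1 hdisjCD h') (Finset.sdiff_subset ha)
      · exact (Finset.mem_sdiff.1 ha).2 h'
    · subst h
      exact (Finset.mem_sdiff.1 hbE).2 hb
  have htogiff : ∀ e : Sym2 V, e ∉ m1 → e ∉ m2 → (togE Q e ↔ togE P e) := by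
    intro e he1 he2
    induction e with
    | _ a b =>
      constructor
      · rintro ⟨E, hE, hab⟩
        obtain ⟨haE, hbE⟩ := forall_mem_sym2.1 hab
        rcases hmemN.1 (hQmem.1 hE).2 with ⟨hEp, _, _⟩ | h | h
        · exact ⟨E, hEp, hab⟩
        · subst h
          by_cases haC : a ∈ C <;> by_cases hbC : b ∈ C
          · exact ⟨C, hC, forall_mem_sym2.2 ⟨haC, hbC⟩⟩
          · have hbM : b ∈ M := (Finset.mem_union.1 hbE).resolve_left hbC
            exact absurd (mem_pairImage.2 ⟨a, haC, b, hbM, rfl⟩) he1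
          · have haM : a ∈ M := (Finset.mem_union.1 haE).resolve_left haC
            exact absurd (mem_pairImage.2 ⟨b, hbC, a, haM, Sym2.eq_swap⟩) he1
          · have haM : a ∈ M := (Finset.mem_union.1 haE).resolve_left haC
            have hbM : b ∈ M := (Finset.mem_union.1 hbE).resolve_left hbC
            exact ⟨D, hD, forall_mem_sym2.2 ⟨hM haM, hM hbM⟩⟩
        · subst h
          exact ⟨D, hD, forall_mem_sym2.2
            ⟨Finset.sdiff_subset haE, Finset.sdiff_subset hbE⟩⟩
      · rintro ⟨E, hE, hab⟩
        obtain ⟨haE, hbE⟩ := forall_mem_sym2.1 hab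
        by_cases hEC : E = C
        · subst hEC
          refine ⟨E ∪ M, hQmem.2 ⟨(hCne.mono Finset.subset_union_left).ne_empty,
            hmemN.2 (Or.inr (Or.inl rfl))⟩, forall_mem_sym2.2
            ⟨Finset.mem_union_left _ haE, Finset.mem_union_left _ hbE⟩⟩
        · by_cases hED : E = D
          · subst hED
            by_cases haM : a ∈ M <;> by_cases hbM : b ∈ M
            · exact ⟨C ∪ M, hQmem.2 ⟨(hCne.mono Finset.subset_union_left).ne_empty,
                hmemN.2 (Or.inr (Or.inl rfl))⟩, forall_mem_sym2.2
                ⟨Finset.mem_union_right _ haM, Finset.mem_union_right _ hbM⟩⟩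
            · exact absurd (mem_pairImage.2
                ⟨b, Finset.mem_sdiff.2 ⟨hbE, hbM⟩, a, haM, Sym2.eq_swap⟩) he2
            · exact absurd (mem_pairImage.2
                ⟨a, Finset.mem_sdiff.2 ⟨haE, haM⟩, b, hbM, rfl⟩) he2
            · refine ⟨E \ M, hQmem.2 ⟨?_, hmemN.2 (Or.inr (Or.inr rfl))⟩,
                forall_mem_sym2.2 ⟨Finset.mem_sdiff.2 ⟨haE, haM⟩, Finset.mem_sdiff.2 ⟨hbE, hbM⟩⟩⟩
              exact Finset.ne_empty_of_mem (Finset.mem_sdiff.2 ⟨haE, haM⟩)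
          · exact ⟨E, hQmem.2 ⟨Finset.ne_empty_of_mem haE,
              hmemN.2 (Or.inl ⟨hE, hEC, hED⟩)⟩, hab⟩
  -- cost identity
  rw [cost_eq_sum, cost_eq_sum, eCnt_eq_sum G C M, neCnt_eq_sum G hd1,
    eCnt_eq_sum G (D \ M) M, neCnt_eq_sum G hd2,
    ← sum_pairImage hd1 (fun e => if e ∈ G.edgeSet then 1 else 0),
    ← sum_pairImage hd1 (fun e => if e ∈ Gᶜ.edgeSet then 1 else 0),
    ← sum_pairImage hd2 (fun e => if e ∈ G.edgeSet then 1 else 0),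
    ← sum_pairImage hd2 (fun e => if e ∈ Gᶜ.edgeSet then 1 else 0),
    ← hm1, ← hm2,
    ← sum_ite_mem_univ m1 (fun e => if e ∈ G.edgeSet then 1 else 0),
    ← sum_ite_mem_univ m1 (fun e => if e ∈ Gᶜ.edgeSet then 1 else 0),
    ← sum_ite_mem_univ m2 (fun e => if e ∈ G.edgeSet then 1 else 0),
    ← sum_ite_mem_univ m2 (fun e => if e ∈ Gᶜ.edgeSet then 1 else 0),
    ← Finset.sum_add_distrib, ← Finset.sum_add_distrib,
    ← Finset.sum_add_distrib, ← Finset.sum_add_distrib]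
  apply Finset.sum_congr rfl
  intro e _
  by_cases he1 : e ∈ m1
  · have he2 : e ∉ m2 := hm12 e he1
    rw [if_pos he1, if_pos he1, if_neg he2, if_neg he2,
      wgt_of_tog (htogQm1 e he1), wgt_of_not_tog (htogPm1 e he1)]
    ring
  · by_cases he2 : e ∈ m2
    · rw [if_pos he2, if_pos he2, if_neg he1, if_neg he1,
        wgt_of_not_tog (htogQm2 e he2), wgt_of_tog (htogPm2 e he2)]
      ring
    · rw [if_neg he1, if_neg he1, if_neg he2, if_neg he2]
      have := htogiff e he1 he2
      unfold wgt
      simp only [this]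

end Surgery2
section Counting

open scoped Classical

variable {V : Type u} [Fintype V] [DecidableEq V]

lemma eCnt_union_left (G : SimpleGraph V) {S₁ S₂ : Finset V} (T : Finset V)
    (h : Disjoint S₁ S₂) : eCnt G (S₁ ∪ S₂) T = eCnt G S₁ T + eCnt G S₂ T := by
  unfold eCnt
  rw [Finset.union_product, Finset.filter_union]
  apply Finset.card_union_of_disjoint
  rw [Finset.disjoint_left]
  intro p hp1 hp2
  simp only [Finset.mem_filter, Finset.mem_product] at hp1 hp2
  exact Finset.disjoint_left.1 h hp1.1.1 hp2.1.1

lemma neCnt_union_left (G : SimpleGraph V) {S₁ S₂ : Finset V} (T : Finset V)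
    (h : Disjoint S₁ S₂) : neCnt G (S₁ ∪ S₂) T = neCnt G S₁ T + neCnt G S₂ T := by
  unfold neCnt
  rw [Finset.union_product, Finset.filter_union]
  apply Finset.card_union_of_disjoint
  rw [Finset.disjoint_left]
  intro p hp1 hp2
  simp only [Finset.mem_filter, Finset.mem_product] at hp1 hp2
  exact Finset.disjoint_left.1 h hp1.1.1 hp2.1.1

lemma eCnt_union_right (G : SimpleGraph V) (S : Finset V) {T₁ T₂ : Finset V}
    (h : Disjoint T₁ T₂) : eCnt G S (T₁ ∪ T₂) = eCnt G S T₁ + eCnt G S T₂ := by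
  unfold eCnt
  rw [Finset.product_union, Finset.filter_union]
  apply Finset.card_union_of_disjoint
  rw [Finset.disjoint_left]
  intro p hp1 hp2
  simp only [Finset.mem_filter, Finset.mem_product] at hp1 hp2
  exact Finset.disjoint_left.1 h hp1.1.2 hp2.1.2

lemma neCnt_union_right (G : SimpleGraph V) (S : Finset V) {T₁ T₂ : Finset V}
    (h : Disjoint T₁ T₂) : neCnt G S (T₁ ∪ T₂) = neCnt G S T₁ + neCnt G S T₂ := by
  unfold neCnt
  rw [Finset.product_union, Finset.filter_union]
  apply Finset.card_union_of_disjoint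
  rw [Finset.disjoint_left]
  intro p hp1 hp2
  simp only [Finset.mem_filter, Finset.mem_product] at hp1 hp2
  exact Finset.disjoint_left.1 h hp1.1.2 hp2.1.2

lemma eCnt_of_full (G : SimpleGraph V) {S T : Finset V}
    (h : ∀ a ∈ S, ∀ b ∈ T, G.Adj a b) : eCnt G S T = S.card * T.card := by
  unfold eCnt
  rw [Finset.filter_true_of_mem, Finset.card_product]
  rintro ⟨a, b⟩ hp
  obtain ⟨ha, hb⟩ := Finset.mem_product.1 hp
  exact h a ha b hb

lemma neCnt_of_full (G : SimpleGraph V) {S T : Finset V}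
    (h : ∀ a ∈ S, ∀ b ∈ T, G.Adj a b) : neCnt G S T = 0 := by
  unfold neCnt
  rw [Finset.card_eq_zero, Finset.filter_eq_empty_iff]
  rintro ⟨a, b⟩ hp
  obtain ⟨ha, hb⟩ := Finset.mem_product.1 hp
  simp only [not_not]
  exact h a ha b hb

lemma eCnt_of_empty (G : SimpleGraph V) {S T : Finset V}
    (h : ∀ a ∈ S, ∀ b ∈ T, ¬ G.Adj a b) : eCnt G S T = 0 := by
  unfold eCnt
  rw [Finset.card_eq_zero, Finset.filter_eq_empty_iff]
  rintro ⟨a, b⟩ hp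
  obtain ⟨ha, hb⟩ := Finset.mem_product.1 hp
  exact h a ha b hb

lemma neCnt_of_empty (G : SimpleGraph V) {S T : Finset V}
    (h : ∀ a ∈ S, ∀ b ∈ T, ¬ G.Adj a b) : neCnt G S T = S.card * T.card := by
  unfold neCnt
  rw [Finset.filter_true_of_mem, Finset.card_product]
  rintro ⟨a, b⟩ hp
  obtain ⟨ha, hb⟩ := Finset.mem_product.1 hp
  exact h a ha b hb

lemma signed_filter_sum {A B : Finset V} (hAB : Disjoint A B) (q : V → Prop) [DecidablePred q] :
    ∑ u ∈ (A ∪ B).filter q, (if u ∈ A then (1 : ℤ) else -1)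
      = (A.filter q).card - (B.filter q).card := by
  rw [Finset.filter_union, Finset.sum_union]
  · have h1 : ∑ u ∈ A.filter q, (if u ∈ A then (1 : ℤ) else -1) = (A.filter q).card := by
      rw [Finset.sum_congr rfl (fun u hu => if_pos (Finset.mem_filter.1 hu).1)]
      simp
    have h2 : ∑ u ∈ B.filter q, (if u ∈ A then (1 : ℤ) else -1) = -((B.filter q).card) := by
      rw [Finset.sum_congr rfl (fun u hu =>
        if_neg (Finset.disjoint_right.1 hAB (Finset.mem_filter.1 hu).1))]
      simp
    rw [h1, h2]
    ring
  · exact Finset.disjoint_filter_filter hAB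

lemma ne_le_e_of_hall (G : SimpleGraph V) {A B A' B' : Finset V} (d : V → ℕ)
    (hAB : Disjoint A B) (hA'B' : Disjoint A' B')
    (hadj1 : ∀ u ∈ A, ∀ w ∈ A' ∪ B', d u ≤ d w → G.Adj u w)
    (hadj2 : ∀ w ∈ A', ∀ u ∈ A ∪ B, d w < d u → G.Adj u w)
    (hall1 : ∀ j : ℕ, (B.filter (fun v => d v ≤ j)).card ≤ (A.filter (fun v => d v ≤ j)).card)
    (hall2 : ∀ j : ℕ, (B'.filter (fun v => d v < j)).card ≤ (A'.filter (fun v => d v < j)).card) :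
    neCnt G (A ∪ B) (A' ∪ B') ≤ eCnt G (A ∪ B) (A' ∪ B') := by
  set S₁ := A ∪ B with hS₁
  set S₂ := A' ∪ B' with hS₂
  suffices h : (neCnt G S₁ S₂ : ℤ) ≤ eCnt G S₁ S₂ by exact_mod_cast h
  have hsum : (eCnt G S₁ S₂ : ℤ) - neCnt G S₁ S₂
      = ∑ p ∈ S₁ ×ˢ S₂, ((if G.Adj p.1 p.2 then (1 : ℤ) else 0)
          - (if G.Adj p.1 p.2 then (0 : ℤ) else 1)) := by
    rw [Finset.sum_sub_distrib]
    congr 1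
    · rw [Finset.sum_boole]
      unfold eCnt
      norm_num
    · have : ∀ p ∈ S₁ ×ˢ S₂, (if G.Adj p.1 p.2 then (0 : ℤ) else 1)
          = (if ¬ G.Adj p.1 p.2 then (1 : ℤ) else 0) := by
        intro p _
        by_cases h : G.Adj p.1 p.2 <;> simp [h]
      rw [Finset.sum_congr rfl this, Finset.sum_boole]
      unfold neCnt
      norm_num
  have hlow : ∀ p ∈ S₁ ×ˢ S₂,
      ((if d p.1 ≤ d p.2 then (if p.1 ∈ A then (1 : ℤ) else -1)
        else (if p.2 ∈ A' then (1 : ℤ) else -1)))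
      ≤ ((if G.Adj p.1 p.2 then (1 : ℤ) else 0) - (if G.Adj p.1 p.2 then (0 : ℤ) else 1)) := by
    rintro ⟨u, w⟩ hp
    obtain ⟨hu, hw⟩ := Finset.mem_product.1 hp
    dsimp only
    by_cases hd : d u ≤ d w
    · rw [if_pos hd]
      by_cases huA : u ∈ A
      · rw [if_pos huA, if_pos (hadj1 u huA w hw hd), if_pos (hadj1 u huA w hw hd)]
        norm_num
      · rw [if_neg huA]
        by_cases hadj : G.Adj u w <;> simp [hadj]
    · rw [if_neg hd]
      by_cases hwA : w ∈ A'
      · have hadj := hadj2 w hwA u hu (by omega)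
        rw [if_pos hwA, if_pos hadj, if_pos hadj]
        norm_num
      · rw [if_neg hwA]
        by_cases hadj : G.Adj u w <;> simp [hadj]
  have hsplit : ∀ p : V × V,
      (if d p.1 ≤ d p.2 then (if p.1 ∈ A then (1 : ℤ) else -1)
        else (if p.2 ∈ A' then (1 : ℤ) else -1))
      = (if d p.1 ≤ d p.2 then (if p.1 ∈ A then (1 : ℤ) else -1) else 0)
        + (if d p.2 < d p.1 then (if p.2 ∈ A' then (1 : ℤ) else -1) else 0) := by
    rintro ⟨u, w⟩
    dsimp only
    by_cases hd : d u ≤ d w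
    · rw [if_pos hd, if_pos hd, if_neg (show ¬ d w < d u by omega), add_zero]
    · rw [if_neg hd, if_neg hd, if_pos (show d w < d u by omega), zero_add]
  have hpos : (0 : ℤ) ≤ ∑ p ∈ S₁ ×ˢ S₂,
      (if d p.1 ≤ d p.2 then (if p.1 ∈ A then (1 : ℤ) else -1)
        else (if p.2 ∈ A' then (1 : ℤ) else -1)) := by
    rw [Finset.sum_congr rfl (fun p _ => hsplit p), Finset.sum_add_distrib]
    have hterm1 : (0 : ℤ) ≤ ∑ p ∈ S₁ ×ˢ S₂,
        (if d p.1 ≤ d p.2 then (if p.1 ∈ A then (1 : ℤ) else -1) else 0) := by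
      rw [Finset.sum_product_right]
      apply Finset.sum_nonneg
      intro w _
      rw [← Finset.sum_filter]
      dsimp only
      rw [hS₁, signed_filter_sum hAB (fun u => d u ≤ d w)]
      have := hall1 (d w)
      have hcast : ((B.filter (fun v => d v ≤ d w)).card : ℤ)
          ≤ ((A.filter (fun v => d v ≤ d w)).card : ℤ) := by exact_mod_cast this
      omega
    have hterm2 : (0 : ℤ) ≤ ∑ p ∈ S₁ ×ˢ S₂,
        (if d p.2 < d p.1 then (if p.2 ∈ A' then (1 : ℤ) else -1) else 0) := by
      rw [Finset.sum_product]
      apply Finset.sum_nonneg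
      intro u _
      rw [← Finset.sum_filter]
      dsimp only
      rw [hS₂, signed_filter_sum hA'B' (fun w => d w < d u)]
      have := hall2 (d u)
      have hcast : ((B'.filter (fun v => d v < d u)).card : ℤ)
          ≤ ((A'.filter (fun v => d v < d u)).card : ℤ) := by exact_mod_cast this
      omega
    omega
  have := Finset.sum_le_sum hlow
  omega

end Counting
namespace Cotree

variable {V : Type u} {G : SimpleGraph V} {T s : Cotree V}

lemma ATy_not_mem_X (hT : IsCotree T G) {x y : V}
    (hxs : x ∈ s.leaves) (hys : y ∈ s.leaves) (hxy : x ≠ y) {α : V}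
    (hATy : ATy T s α) : α ∉ s.leaves := by
  intro hαX
  obtain ⟨s₀, hs₀T, hs₀ne, hss₀, holc⟩ := hATy
  cases s₀ with
  | leaf u => exact absurd holc (by simp [oneLeafChild])
  | node b ts₀ =>
    cases b with
    | false => exact absurd holc (by simp [oneLeafChild])
    | true =>
      have holc' : Cotree.leaf α ∈ ts₀ := holc
      obtain ⟨cs, hcs, hscs⟩ := child_of_strict hss₀ hs₀ne
      have hnodup0 : (leavesAux ts₀).Nodup := nodup_subtree T hT.nodup hs₀T
      have hαcs : α ∈ cs.leaves := leaves_subset _ hscs hαX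
      have : Cotree.leaf α = cs :=
        child_eq_of_mem_leaves hnodup0 holc' hcs (by simp [leaves]) hαcs
      exact absurd this.symm (not_leaf_of_supset hxs hys hxy hscs)

end Cotree

section MainProof

open scoped Classical
open Cotree

variable {V : Type u} [Fintype V] [DecidableEq V]

lemma hall_core (G : SimpleGraph V) {T s : Cotree V} (hT : IsCotree T G) (hTPG : TPGCotree T)
    (hs : s ∈ T.subtrees) {x y : V} (hxs : x ∈ s.leaves) (hys : y ∈ s.leaves) (hxy : x ≠ y)
    {𝒞 : Finpartition (univ : Finset V)} (hopt : IsOptimal G 𝒞)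
    {CC : Finset V} (hCC : CC ∈ 𝒞.parts) {xx : V} (hxxC : xx ∈ CC) (hxxX : xx ∈ s.leaves)
    {AA BB : Finset V} (hAAC : AA ⊆ CC) (hBBC : BB ⊆ CC) (hABdisj : Disjoint AA BB)
    (hAX : ∀ a ∈ AA, a ∉ s.leaves) (hBX : ∀ b ∈ BB, b ∉ s.leaves)
    (hATyA : ∀ a ∈ AA, ATy T s a) (hATyB : ∀ b ∈ BB, ¬ ATy T s b)
    (hcover : ∀ v ∈ CC, v ∉ s.leaves → v ∈ AA ∪ BB)
    (q : V → Prop) [DecidablePred q]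
    (hq : ∀ u w : V, q u → ¬ q w → Cotree.dep T s u < Cotree.dep T s w) :
    (BB.filter q).card ≤ (AA.filter q).card := by
  by_cases hBB : (BB.filter q).Nonempty
  · set U : Finset V := (AA.filter q) ∪ (BB.filter q) with hU
    have hUsub : U ⊆ CC := by
      intro v hv
      rcases Finset.mem_union.1 hv with h | h
      · exact hAAC (Finset.mem_filter.1 h).1
      · exact hBBC (Finset.mem_filter.1 h).1
    have hUne : U.Nonempty := hBB.mono Finset.subset_union_right
    have hUX : ∀ v ∈ U, v ∉ s.leaves := by
      intro v hv
      rcases Finset.mem_union.1 hv with h | h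
      · exact hAX v (Finset.mem_filter.1 h).1
      · exact hBX v (Finset.mem_filter.1 h).1
    have hWne : (CC \ U).Nonempty :=
      ⟨xx, Finset.mem_sdiff.2 ⟨hxxC, fun h => hUX xx h hxxX⟩⟩
    obtain ⟨Q, hQcost⟩ := cost_split G 𝒞 hCC hUsub hUne hWne
    have hle : neCnt G U (CC \ U) ≤ eCnt G U (CC \ U) := by
      have := hopt Q
      omega
    have hdep : ∀ u ∈ U, ∀ w ∈ CC \ U, Cotree.dep T s u < Cotree.dep T s w := by
      intro u hu w hw
      obtain ⟨hwC, hwU⟩ := Finset.mem_sdiff.1 hw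
      have hqu : q u := by
        rcases Finset.mem_union.1 hu with h | h
        · exact (Finset.mem_filter.1 h).2
        · exact (Finset.mem_filter.1 h).2
      by_cases hwX : w ∈ s.leaves
      · exact dep_lt_of_X hs hxs (hUX u hu) hwX
      · have hqw : ¬ q w := by
          intro hqw
          exact hwU (by
            rcases Finset.mem_union.1 (hcover w hwC hwX) with h | h
            · exact Finset.mem_union_left _ (Finset.mem_filter.2 ⟨h, hqw⟩)
            · exact Finset.mem_union_right _ (Finset.mem_filter.2 ⟨h, hqw⟩))
        exact hq u w hqu hqw
    have hdisjF : Disjoint (AA.filter q) (BB.filter q) :=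
      Finset.disjoint_filter_filter hABdisj
    have heC : eCnt G U (CC \ U) = (AA.filter q).card * (CC \ U).card := by
      rw [hU, eCnt_union_left G _ hdisjF]
      rw [eCnt_of_full G (fun a ha w hw => adj_of_ATy_dep_lt hT hs hxs hys hxy
          (hATyA a (Finset.mem_filter.1 ha).1)
          (hdep a (Finset.mem_union_left _ ha) w hw)),
        eCnt_of_empty G (fun b hb w hw => not_adj_of_not_ATy_dep_lt hT hTPG hs hxs hys hxy
          (hATyB b (Finset.mem_filter.1 hb).1)
          (hdep b (Finset.mem_union_right _ hb) w hw)), add_zero]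
    have hneC : neCnt G U (CC \ U) = (BB.filter q).card * (CC \ U).card := by
      rw [hU, neCnt_union_left G _ hdisjF]
      rw [neCnt_of_full G (fun a ha w hw => adj_of_ATy_dep_lt hT hs hxs hys hxy
          (hATyA a (Finset.mem_filter.1 ha).1)
          (hdep a (Finset.mem_union_left _ ha) w hw)),
        neCnt_of_empty G (fun b hb w hw => not_adj_of_not_ATy_dep_lt hT hTPG hs hxs hys hxy
          (hATyB b (Finset.mem_filter.1 hb).1)
          (hdep b (Finset.mem_union_right _ hb) w hw)), zero_add]
    rw [heC, hneC] at hle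
    exact Nat.le_of_mul_le_mul_right hle (Finset.card_pos.2 hWne)
  · rw [Finset.not_nonempty_iff_eq_empty.1 hBB]
    simp

lemma main_side (G : SimpleGraph V) {T s : Cotree V} (hT : IsCotree T G) (hTPG : TPGCotree T)
    (hs : s ∈ T.subtrees) {x y : V} (hxs : x ∈ s.leaves) (hys : y ∈ s.leaves) (hxy : x ≠ y)
    {𝒞 : Finpartition (univ : Finset V)} (hopt : IsOptimal G 𝒞)
    {C₁ C₂ A A' B B' : Finset V} (hC₁ : C₁ ∈ 𝒞.parts) (hC₂ : C₂ ∈ 𝒞.parts) (hne : C₁ ≠ C₂)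
    (hxC₁ : x ∈ C₁) (hyC₂ : y ∈ C₂)
    (hA : ∀ v, v ∈ A ↔ v ∈ C₁ ∧ ATy T s v)
    (hA' : ∀ v, v ∈ A' ↔ v ∈ C₂ ∧ ATy T s v)
    (hB : B = C₁ \ (s.leafSet ∪ A)) (hB' : B' = C₂ \ (s.leafSet ∪ A'))
    (hcard' : B'.card ≤ A'.card)
    (hx21 : (C₂ ∩ s.leafSet).card ≤ (C₁ ∩ s.leafSet).card) :
    ∃ 𝒟 : Finpartition (univ : Finset V),
      𝒟.parts = ((𝒞.parts \ {C₁, C₂}) ∪ {C₁ ∪ A' ∪ B', C₂ ∩ s.leafSet}).erase ∅ ∧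
      cost G 𝒟 ≤ cost G 𝒞 := by
  set X : Finset V := s.leafSet with hX
  have hmemX : ∀ v : V, v ∈ X ↔ v ∈ s.leaves := fun v => List.mem_toFinset
  have hdisj12 : Disjoint C₁ C₂ := 𝒞.disjoint hC₁ hC₂ hne
  have hAsub : A ⊆ C₁ := fun v hv => ((hA v).1 hv).1
  have hA'sub : A' ⊆ C₂ := fun v hv => ((hA' v).1 hv).1
  have hAX : ∀ a ∈ A, a ∉ s.leaves := fun a ha =>
    ATy_not_mem_X hT hxs hys hxy ((hA a).1 ha).2
  have hA'X : ∀ a ∈ A', a ∉ s.leaves := fun a ha =>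
    ATy_not_mem_X hT hxs hys hxy ((hA' a).1 ha).2
  have hBsub : B ⊆ C₁ := by rw [hB]; exact Finset.sdiff_subset
  have hB'sub : B' ⊆ C₂ := by rw [hB']; exact Finset.sdiff_subset
  have hBX : ∀ b ∈ B, b ∉ s.leaves := by
    intro b hb hbX
    rw [hB] at hb
    exact (Finset.mem_sdiff.1 hb).2 (Finset.mem_union_left _ ((hmemX b).2 hbX))
  have hB'X : ∀ b ∈ B', b ∉ s.leaves := by
    intro b hb hbX
    rw [hB'] at hb
    exact (Finset.mem_sdiff.1 hb).2 (Finset.mem_union_left _ ((hmemX b).2 hbX))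
  have hABdisj : Disjoint A B := by
    rw [Finset.disjoint_left]
    intro a ha hab
    rw [hB] at hab
    exact (Finset.mem_sdiff.1 hab).2 (Finset.mem_union_right _ ha)
  have hA'B'disj : Disjoint A' B' := by
    rw [Finset.disjoint_left]
    intro a ha hab
    rw [hB'] at hab
    exact (Finset.mem_sdiff.1 hab).2 (Finset.mem_union_right _ ha)
  have hATyB : ∀ b ∈ B, ¬ ATy T s b := by
    intro b hb hATy
    rw [hB] at hb
    obtain ⟨hbC, hbn⟩ := Finset.mem_sdiff.1 hb
    exact hbn (Finset.mem_union_right _ ((hA b).2 ⟨hbC, hATy⟩))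
  have hATyB' : ∀ b ∈ B', ¬ ATy T s b := by
    intro b hb hATy
    rw [hB'] at hb
    obtain ⟨hbC, hbn⟩ := Finset.mem_sdiff.1 hb
    exact hbn (Finset.mem_union_right _ ((hA' b).2 ⟨hbC, hATy⟩))
  have hABeq : C₁ \ X = A ∪ B := by
    ext v
    simp only [Finset.mem_sdiff, Finset.mem_union]
    constructor
    · rintro ⟨hvC, hvX⟩
      by_cases hATy : ATy T s v
      · exact Or.inl ((hA v).2 ⟨hvC, hATy⟩)
      · refine Or.inr ?_
        rw [hB]
        refine Finset.mem_sdiff.2 ⟨hvC, ?_⟩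
        intro hvu
        rcases Finset.mem_union.1 hvu with h | h
        · exact hvX h
        · exact hATy ((hA v).1 h).2
    · rintro (h | h)
      · exact ⟨hAsub h, fun hvX => hAX v h ((hmemX v).1 hvX)⟩
      · refine ⟨hBsub h, fun hvX => hBX v h ((hmemX v).1 hvX)⟩
  have hA'B'eq : C₂ \ X = A' ∪ B' := by
    ext v
    simp only [Finset.mem_sdiff, Finset.mem_union]
    constructor
    · rintro ⟨hvC, hvX⟩
      by_cases hATy : ATy T s v
      · exact Or.inl ((hA' v).2 ⟨hvC, hATy⟩)
      · refine Or.inr ?_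
        rw [hB']
        refine Finset.mem_sdiff.2 ⟨hvC, ?_⟩
        intro hvu
        rcases Finset.mem_union.1 hvu with h | h
        · exact hvX h
        · exact hATy ((hA' v).1 h).2
    · rintro (h | h)
      · exact ⟨hA'sub h, fun hvX => hA'X v h ((hmemX v).1 hvX)⟩
      · refine ⟨hB'sub h, fun hvX => hB'X v h ((hmemX v).1 hvX)⟩
  have hxX : x ∈ X := (hmemX x).2 hxs
  have hyX : y ∈ X := (hmemX y).2 hys
  -- Hall conditions
  have hall1 : ∀ j : ℕ, (B.filter (fun v => Cotree.dep T s v ≤ j)).card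
      ≤ (A.filter (fun v => Cotree.dep T s v ≤ j)).card := by
    intro j
    refine hall_core G hT hTPG hs hxs hys hxy hopt hC₁ hxC₁ hxs hAsub hBsub hABdisj hAX hBX
      (fun a ha => ((hA a).1 ha).2) hATyB ?_ _ ?_
    · intro v hv hvX
      rw [← hABeq]
      exact Finset.mem_sdiff.2 ⟨hv, fun h => hvX ((hmemX v).1 h)⟩
    · intro u w hu hw
      have h1 : Cotree.dep T s u ≤ j := hu
      have h2 : ¬ Cotree.dep T s w ≤ j := hw
      omega
  have hall2 : ∀ j : ℕ, (B'.filter (fun v => Cotree.dep T s v < j)).card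
      ≤ (A'.filter (fun v => Cotree.dep T s v < j)).card := by
    intro j
    refine hall_core G hT hTPG hs hxs hys hxy hopt hC₂ hyC₂ hys hA'sub hB'sub hA'B'disj
      hA'X hB'X (fun a ha => ((hA' a).1 ha).2) hATyB' ?_ _ ?_
    · intro v hv hvX
      rw [← hA'B'eq]
      exact Finset.mem_sdiff.2 ⟨hv, fun h => hvX ((hmemX v).1 h)⟩
    · intro u w hu hw
      have h1 : Cotree.dep T s u < j := hu
      have h2 : ¬ Cotree.dep T s w < j := hw
      omega
  -- Z ≤ 0
  have hZ : neCnt G (A ∪ B) (A' ∪ B') ≤ eCnt G (A ∪ B) (A' ∪ B') := by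
    apply ne_le_e_of_hall G (Cotree.dep T s) hABdisj hA'B'disj ?_ ?_ hall1 hall2
    · intro u hu w hw hdep
      have hATyu : ATy T s u := ((hA u).1 hu).2
      rcases Nat.lt_or_ge (Cotree.dep T s u) (Cotree.dep T s w) with h | h
      · exact adj_of_ATy_dep_lt hT hs hxs hys hxy hATyu h
      · have heq : Cotree.dep T s u = Cotree.dep T s w := by omega
        have hwC₂ : w ∈ C₂ := by
          rcases Finset.mem_union.1 hw with h' | h'
          · exact hA'sub h'
          · exact hB'sub h'
        have hwu : w ≠ u := fun h' =>
          Finset.disjoint_left.1 hdisj12 (hAsub hu) (h' ▸ hwC₂)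
        exact adj_of_ATy_dep_eq hT hs hxs hys hxy hATyu heq hwu
    · intro w hw u hu hdep
      exact (adj_of_ATy_dep_lt hT hs hxs hys hxy ((hA' w).1 hw).2 hdep).symm
  -- the move
  obtain ⟨Q, hQparts, hQcost⟩ := cost_move G 𝒞 hC₁ hC₂ hne (Finset.sdiff_subset (s := C₂) (t := X))
  have hX₂eq : C₂ \ (C₂ \ X) = C₂ ∩ X := by
    rw [sdiff_sdiff_right_self]
    rfl
  refine ⟨Q, ?_, ?_⟩
  · rw [hQparts, hX₂eq]
    congr 2
    rw [Finset.union_assoc, ← hA'B'eq]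
  -- cost inequality
  have hkey : neCnt G C₁ (C₂ \ X) + eCnt G (C₂ ∩ X) (C₂ \ X)
      ≤ eCnt G C₁ (C₂ \ X) + neCnt G (C₂ ∩ X) (C₂ \ X) := by
    have hC₁eq : C₁ = (C₁ ∩ X) ∪ (C₁ \ X) := by
      rw [← Finset.inf_eq_inter, ← Finset.sup_eq_union, sup_inf_sdiff]
    have hd1 : Disjoint (C₁ ∩ X) (C₁ \ X) := by
      rw [Finset.disjoint_left]
      intro v hv hv'
      exact (Finset.mem_sdiff.1 hv').2 (Finset.mem_inter.1 hv).2
    have hdA'B' : Disjoint A' B' := hA'B'disj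
    -- block adjacency facts
    have hfullA' : ∀ u : V, u ∈ X → ∀ w ∈ A', G.Adj u w := by
      intro u hu w hw
      have : G.Adj w u := adj_of_ATy_dep_lt hT hs hxs hys hxy ((hA' w).1 hw).2
        (dep_lt_of_X hs hxs (hA'X w hw) ((hmemX u).1 hu))
      exact this.symm
    have hemptyB' : ∀ u : V, u ∈ X → ∀ w ∈ B', ¬ G.Adj u w := by
      intro u hu w hw hadj
      exact not_adj_of_not_ATy_dep_lt hT hTPG hs hxs hys hxy (hATyB' w hw)
        (dep_lt_of_X hs hxs (hB'X w hw) ((hmemX u).1 hu)) hadj.symm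
    -- decompose everything
    have e1 : eCnt G C₁ (C₂ \ X) = eCnt G (C₁ ∩ X) (C₂ \ X) + eCnt G (C₁ \ X) (C₂ \ X) := by
      conv_lhs => rw [hC₁eq]
      exact eCnt_union_left G _ hd1
    have ne1 : neCnt G C₁ (C₂ \ X) = neCnt G (C₁ ∩ X) (C₂ \ X) + neCnt G (C₁ \ X) (C₂ \ X) := by
      conv_lhs => rw [hC₁eq]
      exact neCnt_union_left G _ hd1
    have e2 : eCnt G (C₁ ∩ X) (C₂ \ X) = (C₁ ∩ X).card * A'.card := by
      rw [hA'B'eq, eCnt_union_right G _ hdA'B',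
        eCnt_of_full G (fun a ha b hb => hfullA' a (Finset.mem_inter.1 ha).2 b hb),
        eCnt_of_empty G (fun a ha b hb => hemptyB' a (Finset.mem_inter.1 ha).2 b hb), add_zero]
    have ne2 : neCnt G (C₁ ∩ X) (C₂ \ X) = (C₁ ∩ X).card * B'.card := by
      rw [hA'B'eq, neCnt_union_right G _ hdA'B',
        neCnt_of_full G (fun a ha b hb => hfullA' a (Finset.mem_inter.1 ha).2 b hb),
        neCnt_of_empty G (fun a ha b hb => hemptyB' a (Finset.mem_inter.1 ha).2 b hb), zero_add]
    have e3 : eCnt G (C₂ ∩ X) (C₂ \ X) = (C₂ ∩ X).card * A'.card := by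
      rw [hA'B'eq, eCnt_union_right G _ hdA'B',
        eCnt_of_full G (fun a ha b hb => hfullA' a (Finset.mem_inter.1 ha).2 b hb),
        eCnt_of_empty G (fun a ha b hb => hemptyB' a (Finset.mem_inter.1 ha).2 b hb), add_zero]
    have ne3 : neCnt G (C₂ ∩ X) (C₂ \ X) = (C₂ ∩ X).card * B'.card := by
      rw [hA'B'eq, neCnt_union_right G _ hdA'B',
        neCnt_of_full G (fun a ha b hb => hfullA' a (Finset.mem_inter.1 ha).2 b hb),
        neCnt_of_empty G (fun a ha b hb => hemptyB' a (Finset.mem_inter.1 ha).2 b hb), zero_add]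
    have hZ' : neCnt G (C₁ \ X) (C₂ \ X) ≤ eCnt G (C₁ \ X) (C₂ \ X) := by
      rw [hABeq, hA'B'eq]
      exact hZ
    have hprod : (C₁ ∩ X).card * B'.card + (C₂ ∩ X).card * A'.card
        ≤ (C₁ ∩ X).card * A'.card + (C₂ ∩ X).card * B'.card := by
      obtain ⟨k, hk⟩ := Nat.exists_eq_add_of_le hx21
      obtain ⟨m, hm⟩ := Nat.exists_eq_add_of_le hcard'
      rw [hk, hm]
      ring_nf
      nlinarith
    rw [e1, ne1, e2, ne2, e3, ne3]
    omega
  rw [hX₂eq] at hQcost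
  have := hopt Q
  omega

end MainProof

theorem statement10 {V : Type u} [Fintype V] [DecidableEq V] (G : SimpleGraph V)
    (T : Cotree V) (hT : IsCotree T G) (hTPG : TPGCotree T)
    (s : Cotree V) (hs : s ∈ T.subtrees)
    (𝒞 : Finpartition (univ : Finset V)) (hopt : IsOptimal G 𝒞)
    (C₁ C₂ : Finset V) (hC₁ : C₁ ∈ 𝒞.parts) (hC₂ : C₂ ∈ 𝒞.parts) (hne : C₁ ≠ C₂)
    (hX₁ : (C₁ ∩ s.leafSet).Nonempty) (hX₂ : (C₂ ∩ s.leafSet).Nonempty)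
    (A A' B B' : Finset V)
    (hA : ∀ v, v ∈ A ↔ v ∈ C₁ ∧
      ∃ s' ∈ T.subtrees, s' ≠ s ∧ s ∈ s'.subtrees ∧ s'.oneLeafChild v)
    (hA' : ∀ v, v ∈ A' ↔ v ∈ C₂ ∧
      ∃ s' ∈ T.subtrees, s' ≠ s ∧ s ∈ s'.subtrees ∧ s'.oneLeafChild v)
    (hB : B = C₁ \ (s.leafSet ∪ A)) (hB' : B' = C₂ \ (s.leafSet ∪ A'))
    (hcard : B.card ≤ A.card) (hcard' : B'.card ≤ A'.card) :
    ∃ 𝒟 : Finpartition (univ : Finset V),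
      (𝒟.parts = ((𝒞.parts \ {C₁, C₂}) ∪ {C₁ ∪ A' ∪ B', C₂ ∩ s.leafSet}).erase ∅ ∨
       𝒟.parts = ((𝒞.parts \ {C₁, C₂}) ∪ {C₁ ∩ s.leafSet, C₂ ∪ A ∪ B}).erase ∅) ∧
      cost G 𝒟 ≤ cost G 𝒞 := by
  obtain ⟨x, hx⟩ := hX₁
  obtain ⟨y, hy⟩ := hX₂
  rw [Finset.mem_inter] at hx hy
  have hdisj : Disjoint C₁ C₂ := 𝒞.disjoint hC₁ hC₂ hne
  have hxy : x ≠ y := fun h => Finset.disjoint_left.1 hdisj hx.1 (h ▸ hy.1)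
  have hxs : x ∈ s.leaves := List.mem_toFinset.1 hx.2
  have hys : y ∈ s.leaves := List.mem_toFinset.1 hy.2
  have hA2 : ∀ v, v ∈ A ↔ v ∈ C₁ ∧ Cotree.ATy T s v := hA
  have hA'2 : ∀ v, v ∈ A' ↔ v ∈ C₂ ∧ Cotree.ATy T s v := hA'
  rcases le_total ((C₂ ∩ s.leafSet).card) ((C₁ ∩ s.leafSet).card) with hcmp | hcmp
  · obtain ⟨𝒟, hp, hc⟩ := main_side G hT hTPG hs hxs hys hxy hopt hC₁ hC₂ hne hx.1 hy.1
      hA2 hA'2 hB hB' hcard' hcmp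
    exact ⟨𝒟, Or.inl hp, hc⟩
  · obtain ⟨𝒟, hp, hc⟩ := main_side G hT hTPG hs hys hxs hxy.symm hopt hC₂ hC₁ hne.symm
      hy.1 hx.1 hA'2 hA2 hB' hB hcard hcmp
    refine ⟨𝒟, Or.inr ?_, hc⟩
    rw [hp, Finset.pair_comm C₂ C₁, Finset.pair_comm (C₂ ∪ A ∪ B) (C₁ ∩ s.leafSet)]

end ClusterEditing
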